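/- arXiv:1108.0329 — 2 statements merged into one kernel-verified Lean document; each statement's English description precedes it below -/
import Mathlib

section
/- If P ≡ Q (structural congruence of LCC processes) then P† and Q† are logically equivalent in intuitionistic linear logic. -/
/-- Formulas of first-order intuitionistic linear logic, with de Bruijn
indices for variables (terms are variables). -/
inductive Fm : Type
  | atom : ℕ → List ℕ → Fm
  | one : Fm
  | top : Fm
  | tensor : Fm → Fm → Fm
  | limp : Fm → Fm → Fm
  | with_ : Fm → Fm → Fm
  | bang : Fm → Fm
  | ex : Fm → Fm
  | all : Fm → Fm

namespace Fm

/-- Push a renaming of free variables under a binder. -/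
def under (f : ℕ → ℕ) : ℕ → ℕ
  | 0 => 0
  | n + 1 => f n + 1

/-- Renaming the free variables of a formula. -/
def ren (f : ℕ → ℕ) : Fm → Fm
  | atom p args => atom p (args.map f)
  | one => one
  | top => top
  | tensor A B => tensor (ren f A) (ren f B)
  | limp A B => limp (ren f A) (ren f B)
  | with_ A B => with_ (ren f A) (ren f B)
  | bang A => bang (ren f A)
  | ex A => ex (ren (under f) A)
  | all A => all (ren (under f) A)

/-- Lifting: shift all free variables by one (to go under a binder). -/
def lift (A : Fm) : Fm := ren Nat.succ A

/-- `substAt k t A` substitutes the variable `t` for the de Bruijn index `k`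
in `A`, lowering the indices above `k`. -/
def substAt (k t : ℕ) : Fm → Fm
  | atom p args => atom p (args.map fun n => if n = k then t else if k < n then n - 1 else n)
  | one => one
  | top => top
  | tensor A B => tensor (substAt k t A) (substAt k t B)
  | limp A B => limp (substAt k t A) (substAt k t B)
  | with_ A B => with_ (substAt k t A) (substAt k t B)
  | bang A => bang (substAt k t A)
  | ex A => ex (substAt (k + 1) (t + 1) A)
  | all A => all (substAt (k + 1) (t + 1) A)

/-- Substitution of a variable for the de Bruijn index `0`. -/
def subst (t : ℕ) (A : Fm) : Fm := substAt 0 t A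

end Fm

open Fm

/-- Sequent calculus for first-order intuitionistic linear logic:
`Der Γ A` means `Γ ⊢ A`. -/
inductive Der : List Fm → Fm → Prop
  | id (A) : Der [A] A
  | exch {Γ Δ A} (h : Γ.Perm Δ) : Der Γ A → Der Δ A
  | cut {Γ Δ A C} : Der Γ A → Der (A :: Δ) C → Der (Γ ++ Δ) C
  | one_r : Der [] one
  | one_l {Γ A} : Der Γ A → Der (one :: Γ) A
  | top_r (Γ) : Der Γ top
  | tensor_r {Γ Δ A B} : Der Γ A → Der Δ B → Der (Γ ++ Δ) (tensor A B)
  | tensor_l {Γ A B C} : Der (A :: B :: Γ) C → Der (tensor A B :: Γ) C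
  | limp_r {Γ A B} : Der (A :: Γ) B → Der Γ (limp A B)
  | limp_l {Γ Δ A B C} : Der Γ A → Der (B :: Δ) C → Der (limp A B :: (Γ ++ Δ)) C
  | with_r {Γ A B} : Der Γ A → Der Γ B → Der Γ (with_ A B)
  | with_l1 {Γ A B C} : Der (A :: Γ) C → Der (with_ A B :: Γ) C
  | with_l2 {Γ A B C} : Der (B :: Γ) C → Der (with_ A B :: Γ) C
  | bang_l {Γ A C} : Der (A :: Γ) C → Der (bang A :: Γ) C
  | bang_w {Γ A C} : Der Γ C → Der (bang A :: Γ) C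
  | bang_c {Γ A C} : Der (bang A :: bang A :: Γ) C → Der (bang A :: Γ) C
  | bang_r {Γ : List Fm} {A} : Der (Γ.map bang) A → Der (Γ.map bang) (bang A)
  | ex_r {Γ A} (t : ℕ) : Der Γ (subst t A) → Der Γ (ex A)
  | ex_l {Γ A C} : Der (A :: Γ.map lift) (lift C) → Der (ex A :: Γ) C
  | all_r {Γ : List Fm} {A} : Der (Γ.map lift) A → Der Γ (all A)
  | all_l {Γ A C} (t : ℕ) : Der (subst t A :: Γ) C → Der (all A :: Γ) C

/-- Entailment between single formulas. -/
def Entails (A B : Fm) : Prop := Der [A] B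

/-- Logical equivalence: mutual derivability. -/
def LEquiv (A B : Fm) : Prop := Entails A B ∧ Entails B A

/-- LCC processes over the linear constraint formulas `Fm`, with de Bruijn
binders for hiding and for the universally quantified ask. -/
inductive Proc : Type
  | tell : Fm → Proc
  | par : Proc → Proc → Proc
  | sum : Proc → Proc → Proc
  | hide : Proc → Proc
  | repl : Proc → Proc
  | ask : Fm → Proc → Proc

namespace Proc

/-- Renaming the free variables of a process. -/
def pren (f : ℕ → ℕ) : Proc → Proc
  | tell c => tell (Fm.ren f c)
  | par P Q => par (pren f P) (pren f Q)
  | sum P Q => sum (pren f P) (pren f Q)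
  | hide P => hide (pren (Fm.under f) P)
  | repl P => repl (pren f P)
  | ask c P => ask (Fm.ren (Fm.under f) c) (pren (Fm.under f) P)

/-- The translation `†` of LCC processes into linear logic formulas. -/
def trans : Proc → Fm
  | tell c => Fm.tensor c Fm.top
  | par P Q => Fm.tensor (trans P) (trans Q)
  | sum P Q => Fm.tensor (Fm.with_ (trans P) (trans Q)) Fm.top
  | hide P => Fm.ex (trans P)
  | repl P => Fm.tensor (Fm.bang (trans P)) Fm.top
  | ask c P => Fm.tensor (Fm.all (Fm.limp c (trans P))) Fm.top

end Proc

open Proc in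
/-- Structural congruence of LCC processes (de Bruijn presentation, in which
α-conversion is automatic). -/
inductive SC : Proc → Proc → Prop
  | refl (P) : SC P P
  | symm {P Q} : SC P Q → SC Q P
  | trans {P Q R} : SC P Q → SC Q R → SC P R
  | par_comm (P Q) : SC (par P Q) (par Q P)
  | par_assoc (P Q R) : SC (par (par P Q) R) (par P (par Q R))
  | sum_comm (P Q) : SC (sum P Q) (sum Q P)
  | sum_assoc (P Q R) : SC (sum (sum P Q) R) (sum P (sum Q R))
  | par_one (P) : SC (par P (tell Fm.one)) P
  | hide_one : SC (hide (tell Fm.one)) (tell Fm.one)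
  | hide_swap (P) :
      SC (hide (hide P))
        (hide (hide (pren (fun n => if n = 0 then 1 else if n = 1 then 0 else n) P)))
  | repl_unfold (P) : SC (repl P) (par P (repl P))
  | tell_merge {c d e} (h : LEquiv (Fm.tensor c d) e) :
      SC (par (tell c) (tell d)) (tell e)
  | scope (P Q) : SC (par P (hide Q)) (hide (par (pren Nat.succ P) Q))
  | ctx_par {P P'} (Q) : SC P P' → SC (par P Q) (par P' Q)
  | ctx_hide {P P'} : SC P P' → SC (hide P) (hide P')


/-!
The translation is compositional, so the congruence rules of `≡` reduce to monotonicity of `⊗`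
and `∃`, and each axiom becomes a short derivation. The only non-local fact is that every
translation `P†` absorbs `⊤` (`P†, ⊤ ⊢ P†`), because it is built by `⊗` and `∃` from formulas
of the form `X ⊗ ⊤`; this is what makes `P | 1̄ ≡ P` and the associativity of `+` sound.
The de Bruijn bookkeeping of exchange of hidings and scope extrusion becomes composition of
renamings once substitution of a variable is itself written as a renaming (`substAt_eq_ren`).
-/

namespace Fm

theorem under_id : under id = id := by
  funext n
  cases n <;> rfl

theorem under_comp (f g : ℕ → ℕ) : under (f ∘ g) = under f ∘ under g := by
  funext n
  cases n <;> rfl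

@[simp]
theorem ren_id (A : Fm) : ren id A = A := by
  induction A <;> simp_all [ren, under_id]

theorem ren_ren (f g : ℕ → ℕ) (A : Fm) : ren f (ren g A) = ren (f ∘ g) A := by
  induction A generalizing f g <;> simp_all [ren, under_comp]

def substFn (k t n : ℕ) : ℕ := if n = k then t else if k < n then n - 1 else n

theorem under_substFn (k t : ℕ) : under (substFn k t) = substFn (k + 1) (t + 1) := by
  funext n
  cases n with
  | zero => simp [under, substFn]
  | succ n => simp only [under, substFn]; split_ifs <;> omega

theorem substAt_eq_ren (k t : ℕ) (A : Fm) : substAt k t A = ren (substFn k t) A := by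
  induction A generalizing k t <;> simp_all [substAt, ren, under_substFn, substFn]

theorem subst_zero_ren_under_succ (A : Fm) : subst 0 (ren (under Nat.succ) A) = A := by
  rw [subst, substAt_eq_ren, ren_ren]
  convert ren_id A
  funext n
  cases n <;> simp [under, substFn]

end Fm

theorem Proc.trans_pren (f : ℕ → ℕ) (P : Proc) : (P.pren f).trans = ren f P.trans := by
  induction P generalizing f <;> simp_all [pren, Proc.trans, ren]

namespace Der

theorem swap {Γ : List Fm} {A B C : Fm} (h : Der (A :: B :: Γ) C) : Der (B :: A :: Γ) C :=
  exch (List.Perm.swap B A Γ) h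

theorem cut_single {Γ : List Fm} {A C : Fm} (h₁ : Der Γ A) (h₂ : Der [A] C) : Der Γ C := by
  simpa using cut (Δ := []) h₁ h₂

theorem tensor_top_r {Γ : List Fm} {A : Fm} (h : Der Γ A) : Der Γ (tensor A top) := by
  simpa using tensor_r (Δ := []) h (top_r [])

theorem lift_ex_r {Γ : List Fm} {A : Fm} (h : Der Γ A) : Der Γ (lift (ex A)) :=
  ex_r 0 ((subst_zero_ren_under_succ A).symm ▸ h)

theorem ex_l_ex_r {Γ : List Fm} {A B : Fm} (h : Der (A :: Γ.map lift) B) :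
    Der (ex A :: Γ) (ex B) :=
  ex_l (lift_ex_r h)

end Der

theorem Entails.refl (A : Fm) : Entails A A := Der.id A

theorem Entails.trans {A B C : Fm} (h₁ : Entails A B) (h₂ : Entails B C) : Entails A C :=
  Der.cut_single h₁ h₂

theorem Entails.tensor_mono {A A' B B' : Fm} (h₁ : Entails A A') (h₂ : Entails B B') :
    Entails (tensor A B) (tensor A' B') :=
  Der.tensor_l (Der.tensor_r h₁ h₂)

theorem Entails.ex_mono {A A' : Fm} (h : Entails A A') : Entails (ex A) (ex A') :=
  Der.ex_l_ex_r h

namespace LEquiv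

theorem refl (A : Fm) : LEquiv A A := ⟨.refl A, .refl A⟩

theorem symm {A B : Fm} (h : LEquiv A B) : LEquiv B A := ⟨h.2, h.1⟩

theorem trans {A B C : Fm} (h₁ : LEquiv A B) (h₂ : LEquiv B C) : LEquiv A C :=
  ⟨h₁.1.trans h₂.1, h₂.2.trans h₁.2⟩

theorem tensor_congr {A A' B B' : Fm} (h₁ : LEquiv A A') (h₂ : LEquiv B B') :
    LEquiv (tensor A B) (tensor A' B') :=
  ⟨h₁.1.tensor_mono h₂.1, h₁.2.tensor_mono h₂.2⟩

theorem tensor_top_congr {A B : Fm} (h : LEquiv A B) : LEquiv (tensor A top) (tensor B top) :=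
  h.tensor_congr (refl top)

theorem ex_congr {A A' : Fm} (h : LEquiv A A') : LEquiv (ex A) (ex A') :=
  ⟨h.1.ex_mono, h.2.ex_mono⟩

theorem tensor_comm (A B : Fm) : LEquiv (tensor A B) (tensor B A) :=
  have comm (A B : Fm) : Entails (tensor A B) (tensor B A) :=
    Der.tensor_l (Der.swap (Der.tensor_r (Der.id B) (Der.id A)))
  ⟨comm A B, comm B A⟩

theorem tensor_assoc (A B C : Fm) :
    LEquiv (tensor (tensor A B) C) (tensor A (tensor B C)) :=
  ⟨Der.tensor_l (Der.tensor_l (Der.tensor_r (Der.id A) (Der.tensor_r (Der.id B) (Der.id C)))),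
    Der.tensor_l (Der.swap (Der.tensor_l (Der.exch (.trans (.swap B A [C]) (.cons B (.swap C A [])))
      (Der.tensor_r (Der.tensor_r (Der.id A) (Der.id B)) (Der.id C)))))⟩

theorem with_comm (A B : Fm) : LEquiv (with_ A B) (with_ B A) :=
  have comm (A B : Fm) : Entails (with_ A B) (with_ B A) :=
    Der.with_r (Der.with_l2 (Der.id B)) (Der.with_l1 (Der.id A))
  ⟨comm A B, comm B A⟩

end LEquiv

def AbsorbsTop (A : Fm) : Prop := Der [A, top] A

theorem absorbsTop_tensor_top (A : Fm) : AbsorbsTop (tensor A top) :=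
  Der.tensor_l (Der.tensor_r (Der.id A) (Der.top_r [top, top]))

theorem AbsorbsTop.tensor_left (A : Fm) {B : Fm} (h : AbsorbsTop B) : AbsorbsTop (tensor A B) :=
  Der.tensor_l (Der.tensor_r (Der.id A) h)

theorem AbsorbsTop.ex {A : Fm} (h : AbsorbsTop A) : AbsorbsTop (ex A) :=
  Der.ex_l_ex_r h

theorem Proc.absorbsTop_trans : ∀ P : Proc, AbsorbsTop P.trans
  | tell c => absorbsTop_tensor_top c
  | par P Q => (absorbsTop_trans Q).tensor_left P.trans
  | sum _ _ => absorbsTop_tensor_top _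
  | hide P => (absorbsTop_trans P).ex
  | repl _ => absorbsTop_tensor_top _
  | ask _ _ => absorbsTop_tensor_top _

namespace LEquiv

theorem tensor_top_of_absorbsTop {A : Fm} (h : AbsorbsTop A) : LEquiv (tensor A top) A :=
  ⟨Der.tensor_l h, Der.tensor_top_r (Der.id A)⟩

theorem one_tensor_top : LEquiv (tensor one top) top :=
  ⟨Der.top_r _, Der.tensor_r (Γ := []) Der.one_r (Der.top_r [top])⟩

theorem tensor_one_top {A : Fm} (h : AbsorbsTop A) : LEquiv (tensor A (tensor one top)) A :=
  ((refl A).tensor_congr one_tensor_top).trans (tensor_top_of_absorbsTop h)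

theorem with_tensor_top_assoc {A B C : Fm} (hA : AbsorbsTop A) (hB : AbsorbsTop B)
    (hC : AbsorbsTop C) :
    LEquiv (with_ (tensor (with_ A B) top) C) (with_ A (tensor (with_ B C) top)) :=
  ⟨Der.with_r (Der.with_l1 (Der.tensor_l (Der.with_l1 hA)))
      (Der.tensor_top_r (Der.with_r (Der.with_l1 (Der.tensor_l (Der.with_l2 hB)))
        (Der.with_l2 (Der.id C)))),
    Der.with_r (Der.tensor_top_r (Der.with_r (Der.with_l1 (Der.id A))
        (Der.with_l2 (Der.tensor_l (Der.with_l1 hB)))))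
      (Der.with_l2 (Der.tensor_l (Der.with_l2 hC)))⟩

theorem ex_tensor_one_top : LEquiv (ex (tensor one top)) (tensor one top) :=
  ⟨Der.ex_l (Γ := []) (Der.id _), Der.ex_r 0 (Der.id _)⟩

theorem bang_tensor_top_unfold (A : Fm) :
    LEquiv (tensor (bang A) top) (tensor A (tensor (bang A) top)) :=
  ⟨Der.tensor_l (Der.bang_c (Der.tensor_r (Der.bang_l (Der.id A))
      (Der.tensor_r (Der.id (bang A)) (Der.top_r [top])))),
    Der.tensor_l (Der.swap (Der.tensor_l (Der.tensor_r (Der.id (bang A)) (Der.top_r [top, A]))))⟩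

theorem tensor_top_tensor_top (A B : Fm) :
    LEquiv (tensor (tensor A top) (tensor B top)) (tensor (tensor A B) top) :=
  have top_absorbed : LEquiv (tensor top (tensor B top)) (tensor B top) :=
    (tensor_comm _ _).trans (tensor_top_of_absorbsTop (absorbsTop_tensor_top B))
  (tensor_assoc _ _ _).trans (((refl A).tensor_congr top_absorbed).trans (tensor_assoc _ _ _).symm)

theorem tensor_ex (A B : Fm) : LEquiv (tensor A (ex B)) (ex (tensor (lift A) B)) :=
  ⟨Der.tensor_l (Der.swap (Der.ex_l_ex_r (Γ := [A])
      (Der.swap (Der.tensor_r (Der.id _) (Der.id B))))),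
    Der.ex_l (Γ := []) (Der.tensor_l (Der.tensor_r (Der.id _) (Der.lift_ex_r (Der.id B))))⟩

end LEquiv

def swap01 (n : ℕ) : ℕ := if n = 0 then 1 else if n = 1 then 0 else n

theorem swap01_comp_swap01 : swap01 ∘ swap01 = id := by
  funext n
  rcases n with _ | _ | n <;> simp [swap01]

theorem Entails.ex_ex_swap01 (A : Fm) : Entails (ex (ex A)) (ex (ex (ren swap01 A))) := by
  -- open both existentials, then re-close them with the two fresh variables exchanged
  refine Der.ex_l (Der.ex_l (Der.ex_r 0 (Der.ex_r 1 ?_)))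
  simp only [subst, substAt_eq_ren, ren_ren, List.map_nil]
  convert Der.id A
  conv_rhs => rw [← ren_id A]
  congr 1
  funext n
  rcases n with _ | _ | n <;> simp [substFn, under, swap01]

theorem LEquiv.ex_ex_swap01 (A : Fm) : LEquiv (ex (ex A)) (ex (ex (ren swap01 A))) :=
  ⟨.ex_ex_swap01 A, by
    simpa only [ren_ren, swap01_comp_swap01, ren_id] using Entails.ex_ex_swap01 (ren swap01 A)⟩

/-- structurally congruent processes have logically equivalent
translations. -/
theorem sc_logical_equiv {P Q : Proc} (h : SC P Q) :
    LEquiv P.trans Q.trans := by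
  induction h with
  | refl => exact .refl _
  | symm _ ih => exact ih.symm
  | trans _ _ ih₁ ih₂ => exact ih₁.trans ih₂
  | par_comm => exact .tensor_comm _ _
  | par_assoc => exact .tensor_assoc _ _ _
  | sum_comm => exact (LEquiv.with_comm _ _).tensor_top_congr
  | sum_assoc P Q R =>
    exact (LEquiv.with_tensor_top_assoc P.absorbsTop_trans Q.absorbsTop_trans
      R.absorbsTop_trans).tensor_top_congr
  | par_one P => exact .tensor_one_top P.absorbsTop_trans
  | hide_one => exact .ex_tensor_one_top
  | hide_swap =>
    simp only [Proc.trans, Proc.trans_pren]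
    exact .ex_ex_swap01 _
  | repl_unfold => exact .bang_tensor_top_unfold _
  | tell_merge h => exact (LEquiv.tensor_top_tensor_top _ _).trans h.tensor_top_congr
  | scope =>
    simp only [Proc.trans, Proc.trans_pren]
    exact .tensor_ex _ _
  | ctx_par _ _ ih => exact ih.tensor_congr (.refl _)
  | ctx_hide _ ih => exact ih.ex_congr
end

section
/- The processes (c → ∃y.P)† and ∃y.(c → P)† (with y free in P, y not free in c) are not in general logically equivalent in linear logic; i.e., there exist c and P such that ∀x(c ⊸ ∃y.P†) ⊗ ⊤ ⊬ ∃y.(∀x(c ⊸ P†) ⊗ ⊤). -/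
open Fm

/-- Environment cons. -/
def econs (d : ℕ) (ρ : ℕ → ℕ) : ℕ → ℕ
  | 0 => d
  | n + 1 => ρ n

/-- Classical evaluation of formulas over the domain `ℕ`, collapsing all
linear connectives to their classical counterparts.  An atom is interpreted
as "all arguments are equal". -/
def eval : Fm → (ℕ → ℕ) → Prop
  | Fm.atom _ args, ρ => ∀ a ∈ args, ∀ b ∈ args, ρ a = ρ b
  | Fm.one, _ => True
  | Fm.top, _ => True
  | Fm.tensor A B, ρ => eval A ρ ∧ eval B ρ
  | Fm.limp A B, ρ => eval A ρ → eval B ρ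
  | Fm.with_ A B, ρ => eval A ρ ∧ eval B ρ
  | Fm.bang A, ρ => eval A ρ
  | Fm.ex A, ρ => ∃ d, eval A (econs d ρ)
  | Fm.all A, ρ => ∀ d, eval A (econs d ρ)

theorem econs_under (d : ℕ) (ρ f : ℕ → ℕ) :
    (fun n => econs d ρ (Fm.under f n)) = econs d (fun n => ρ (f n)) := by
  funext n; cases n <;> rfl

theorem eval_ren (A : Fm) : ∀ (f ρ : ℕ → ℕ), eval (Fm.ren f A) ρ ↔ eval A (fun n => ρ (f n)) := by
  induction A with
  | atom p args => intro f ρ; simp [Fm.ren, eval]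
  | one => intro f ρ; simp [Fm.ren, eval]
  | top => intro f ρ; simp [Fm.ren, eval]
  | tensor A B ihA ihB => intro f ρ; simp [Fm.ren, eval, ihA, ihB]
  | limp A B ihA ihB => intro f ρ; simp [Fm.ren, eval, ihA, ihB]
  | with_ A B ihA ihB => intro f ρ; simp [Fm.ren, eval, ihA, ihB]
  | bang A ihA => intro f ρ; simp [Fm.ren, eval, ihA]
  | ex A ihA =>
      intro f ρ
      simp only [Fm.ren, eval]
      refine exists_congr fun d => ?_
      rw [ihA, econs_under]
  | all A ihA =>
      intro f ρ
      simp only [Fm.ren, eval]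
      refine forall_congr' fun d => ?_
      rw [ihA, econs_under]

/-- Environment corresponding to `substAt k t`. -/
def senv (k t : ℕ) (ρ : ℕ → ℕ) : ℕ → ℕ :=
  fun n => if n = k then ρ t else if k < n then ρ (n - 1) else ρ n

theorem econs_senv (d k t : ℕ) (ρ : ℕ → ℕ) :
    senv (k + 1) (t + 1) (econs d ρ) = econs d (senv k t ρ) := by
  funext n
  cases n with
  | zero => simp [senv, econs]
  | succ m =>
      simp only [senv, econs, Nat.succ_lt_succ_iff, Nat.add_lt_add_iff_right,
        Nat.add_right_cancel_iff]
      by_cases h1 : m = k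
      · simp [h1]
      · simp only [h1, if_false]
        by_cases h2 : k < m
        · have hm : 1 ≤ m := Nat.one_le_iff_ne_zero.mpr (by omega)
          simp only [h2, if_true]
          have : m + 1 - 1 = m := rfl
          rw [this]
          cases m with
          | zero => omega
          | succ l => simp [econs]
        · simp [h2]

theorem senv_point (k t : ℕ) (ρ : ℕ → ℕ) (n : ℕ) :
    ρ (if n = k then t else if k < n then n - 1 else n) = senv k t ρ n := by
  unfold senv; split_ifs <;> rfl

theorem eval_substAt (A : Fm) : ∀ (k t : ℕ) (ρ : ℕ → ℕ),
    eval (Fm.substAt k t A) ρ ↔ eval A (senv k t ρ) := by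
  induction A with
  | atom p args =>
      intro k t ρ
      simp only [Fm.substAt, eval, List.forall_mem_map]
      constructor
      · intro h a ha b hb
        rw [← senv_point k t ρ a, ← senv_point k t ρ b]
        exact h a ha b hb
      · intro h a ha b hb
        rw [senv_point k t ρ a, senv_point k t ρ b]
        exact h a ha b hb
  | one => intro k t ρ; simp [Fm.substAt, eval]
  | top => intro k t ρ; simp [Fm.substAt, eval]
  | tensor A B ihA ihB => intro k t ρ; simp [Fm.substAt, eval, ihA, ihB]
  | limp A B ihA ihB => intro k t ρ; simp [Fm.substAt, eval, ihA, ihB]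
  | with_ A B ihA ihB => intro k t ρ; simp [Fm.substAt, eval, ihA, ihB]
  | bang A ihA => intro k t ρ; simp [Fm.substAt, eval, ihA]
  | ex A ihA =>
      intro k t ρ
      simp only [Fm.substAt, eval]
      refine exists_congr fun d => ?_
      rw [ihA, econs_senv]
  | all A ihA =>
      intro k t ρ
      simp only [Fm.substAt, eval]
      refine forall_congr' fun d => ?_
      rw [ihA, econs_senv]

theorem eval_subst (A : Fm) (t : ℕ) (ρ : ℕ → ℕ) :
    eval (Fm.subst t A) ρ ↔ eval A (econs (ρ t) ρ) := by
  rw [Fm.subst, eval_substAt]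
  have : senv 0 t ρ = econs (ρ t) ρ := by
    funext n; cases n with
    | zero => simp [senv, econs]
    | succ m => simp [senv, econs]
  rw [this]

theorem eval_lift (A : Fm) (d : ℕ) (ρ : ℕ → ℕ) :
    eval (Fm.lift A) (econs d ρ) ↔ eval A ρ := by
  rw [Fm.lift, eval_ren]
  have : (fun n => econs d ρ (Nat.succ n)) = ρ := by funext n; rfl
  rw [this]

/-- Soundness of the sequent calculus with respect to classical evaluation. -/
theorem sound {Γ : List Fm} {A : Fm} (h : Der Γ A) :
    ∀ ρ : ℕ → ℕ, (∀ B ∈ Γ, eval B ρ) → eval A ρ := by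
  induction h with
  | id A => intro ρ h; exact h A (by simp)
  | exch hp _ ih => intro ρ h; exact ih ρ fun B hB => h B (hp.mem_iff.mp hB)
  | cut _ _ ih1 ih2 =>
      intro ρ h
      simp only [List.mem_append] at h
      refine ih2 ρ ?_
      intro B hB
      rcases List.mem_cons.mp hB with rfl | hB
      · exact ih1 ρ fun C hC => h C (Or.inl hC)
      · exact h B (Or.inr hB)
  | one_r => intro ρ _; trivial
  | one_l _ ih => intro ρ h; exact ih ρ fun B hB => h B (by simp [hB])
  | top_r Γ => intro ρ _; trivial
  | tensor_r _ _ ih1 ih2 =>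
      intro ρ h
      simp only [List.mem_append] at h
      exact ⟨ih1 ρ fun B hB => h B (Or.inl hB), ih2 ρ fun B hB => h B (Or.inr hB)⟩
  | tensor_l _ ih =>
      intro ρ h
      have hAB := h _ (List.mem_cons_self)
      refine ih ρ fun B hB => ?_
      rcases List.mem_cons.mp hB with rfl | hB
      · exact hAB.1
      rcases List.mem_cons.mp hB with rfl | hB
      · exact hAB.2
      · exact h B (by simp [hB])
  | limp_r _ ih =>
      intro ρ h hA
      refine ih ρ fun B hB => ?_
      rcases List.mem_cons.mp hB with rfl | hB
      · exact hA
      · exact h B (by simp [hB])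
  | limp_l _ _ ih1 ih2 =>
      intro ρ h
      have himp := h _ (List.mem_cons_self)
      have hA := ih1 ρ fun B hB => h B (by simp [hB])
      refine ih2 ρ fun B hB => ?_
      rcases List.mem_cons.mp hB with rfl | hB
      · exact himp hA
      · exact h B (by simp [hB])
  | with_r _ _ ih1 ih2 => intro ρ h; exact ⟨ih1 ρ h, ih2 ρ h⟩
  | with_l1 _ ih =>
      intro ρ h
      refine ih ρ fun B hB => ?_
      rcases List.mem_cons.mp hB with rfl | hB
      · exact (h _ (List.mem_cons_self)).1
      · exact h B (by simp [hB])
  | with_l2 _ ih =>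
      intro ρ h
      refine ih ρ fun B hB => ?_
      rcases List.mem_cons.mp hB with rfl | hB
      · exact (h _ (List.mem_cons_self)).2
      · exact h B (by simp [hB])
  | bang_l _ ih =>
      intro ρ h
      refine ih ρ fun B hB => ?_
      rcases List.mem_cons.mp hB with rfl | hB
      · exact h (Fm.bang B) (List.mem_cons_self)
      · exact h B (by simp [hB])
  | bang_w _ ih => intro ρ h; exact ih ρ fun B hB => h B (by simp [hB])
  | bang_c _ ih =>
      intro ρ h
      refine ih ρ fun B hB => ?_
      rcases List.mem_cons.mp hB with rfl | hB
      · exact h _ (List.mem_cons_self)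
      rcases List.mem_cons.mp hB with rfl | hB
      · exact h _ (List.mem_cons_self)
      · exact h B (by simp [hB])
  | bang_r _ ih => intro ρ h; exact ih ρ h
  | ex_r t _ ih =>
      intro ρ h
      exact ⟨ρ t, (eval_subst _ t ρ).mp (ih ρ h)⟩
  | ex_l _ ih =>
      intro ρ h
      obtain ⟨d, hd⟩ := h _ (List.mem_cons_self)
      have := ih (econs d ρ) ?_
      · exact (eval_lift _ d ρ).mp this
      · intro B hB
        rcases List.mem_cons.mp hB with rfl | hB
        · exact hd
        · obtain ⟨C, hC, rfl⟩ := List.mem_map.mp hB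
          exact (eval_lift C d ρ).mpr (h C (by simp [hC]))
  | all_r _ ih =>
      intro ρ h d
      refine ih (econs d ρ) fun B hB => ?_
      obtain ⟨C, hC, rfl⟩ := List.mem_map.mp hB
      exact (eval_lift C d ρ).mpr (h C hC)
  | all_l t _ ih =>
      intro ρ h
      refine ih ρ fun B hB => ?_
      rcases List.mem_cons.mp hB with rfl | hB
      · exact (eval_subst _ t ρ).mpr (h _ (List.mem_cons_self) (ρ t))
      · exact h B (by simp [hB])

open Fm in
/-- there exist `c` (with `y` not free in `c`) and `P` such that
`∀x(c ⊸ ∃y.P) ⊗ ⊤ ⊬ ∃y.(∀x(c ⊸ P) ⊗ ⊤)`.  In de Bruijn notation, on the left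
`x` is the outer binder (`c` mentions index 0 = x, `P` indices 0 = y, 1 = x);
on the right the binder order is exchanged, so `P`'s two lowest indices are
swapped and `c` is lifted above index 0. -/
theorem ask_ex_not_logical :
    ∃ c P : Fm,
      ¬ Entails (tensor (all (limp c (ex P))) top)
          (ex (tensor
            (all (limp (ren (fun n => if n = 0 then 0 else n + 1) c)
                       (ren (fun n => if n = 0 then 1 else if n = 1 then 0 else n) P)))
            top)) := by
  refine ⟨Fm.one, Fm.atom 0 [0, 1], fun h => ?_⟩
  have hs := sound h id ?_
  · -- RHS fails
    simp only [Fm.ren, eval, List.map] at hs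
    obtain ⟨e, h1, -⟩ := hs
    have h0 := h1 0 trivial 1 (by simp) 0 (by simp)
    have h2 := h1 1 trivial 1 (by simp) 0 (by simp)
    simp [econs] at h0 h2
    omega
  · -- LHS holds
    intro B hB
    simp only [List.mem_singleton] at hB
    subst hB
    refine ⟨fun d => fun _ => ⟨d, ?_⟩, trivial⟩
    intro a ha b hb
    fin_cases ha <;> fin_cases hb <;> rfl
end
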